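/- Let p and q be fixed distinct primes. For a Boolean function f : {0,1}^n → {0,1}, let d_p(f) and d_q(f) denote its exact representing degrees over ℤ_p and ℤ_q respectively. Then the fraction of functions f : {0,1}^n → {0,1} (out of all 2^{2^n} such functions) satisfying p · q · d_p(f) · d_q(f) > log₂ n − 1 tends to 1 as n → ∞; in particular, d_p(f) · d_q(f) = Ω(log n) almost always. -/

import Mathlib

/-- `P` is multilinear: every variable has individual degree at most 1 in every monomial. -/
def Multilinear {n q : ℕ} (P : MvPolynomial (Fin n) (ZMod q)) : Prop :=
  ∀ d ∈ P.support, ∀ i, d i ≤ 1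

/-- `P` represents `f` over `ℤ_q`: they agree on all 0/1 inputs. -/
def Represents {n q : ℕ} (P : MvPolynomial (Fin n) (ZMod q))
    (f : (Fin n → Bool) → Bool) : Prop :=
  ∀ x : Fin n → Bool,
    MvPolynomial.eval (fun i => if x i then (1 : ZMod q) else 0) P = if f x then 1 else 0

/-- `d` is the exact representing degree of `f` over `ℤ_q`: the (unique) multilinear
polynomial representing `f` over `ℤ_q` has total degree `d`. -/
def RepDegree (q : ℕ) {n : ℕ} (f : (Fin n → Bool) → Bool) (d : ℕ) : Prop :=
  ∃ P : MvPolynomial (Fin n) (ZMod q), Multilinear P ∧ Represents P f ∧ P.totalDegree = d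


/-! If `p q d_p d_q ≤ log₂ n - 1`, then either `d_q = 0`, so `f` is constant, or
`d_p ≤ log₂ n`; either way `f` has a multilinear representation over `ℤ_p` of degree at most
`L = ⌊log₂ n⌋`. Such a polynomial is determined by its coefficients on the at most
`(L + 1)(n + 1)^L` multilinear monomials of degree at most `L`, and it determines `f`. Hence these
exceptional functions number at most `p^((L + 1)(n + 1)^L) ≤ 2^(2^n) / 2^n`, a vanishing fraction
of all `2^(2^n)`. -/

open Filter Finset MvPolynomial Topology

lemma ite_one_zero_injective {R : Type*} [Zero R] [One R] [NeZero (1 : R)] :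
    Function.Injective fun b : Bool => if b then (1 : R) else 0 := by
  intro a b h
  cases a <;> cases b <;> simp_all

section Representation

variable {n q : ℕ} {P : MvPolynomial (Fin n) (ZMod q)} {f g : (Fin n → Bool) → Bool}

lemma Represents.unique [Nontrivial (ZMod q)] (hf : Represents P f) (hg : Represents P g) :
    f = g :=
  funext fun x => ite_one_zero_injective ((hf x).symm.trans (hg x))

lemma Represents.apply_eq_of_totalDegree_eq_zero [Nontrivial (ZMod q)] (hP : Represents P f)
    (h0 : P.totalDegree = 0) (x y : Fin n → Bool) : f x = f y := by
  rw [totalDegree_eq_zero_iff_eq_C] at h0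
  refine ite_one_zero_injective ((hP x).symm.trans (Eq.trans ?_ (hP y)))
  rw [h0, eval_C, eval_C]

end Representation

def HasRepDegreeLE (q : ℕ) {n : ℕ} (f : (Fin n → Bool) → Bool) (D : ℕ) : Prop :=
  ∃ P : MvPolynomial (Fin n) (ZMod q), Multilinear P ∧ Represents P f ∧ P.totalDegree ≤ D

lemma hasRepDegreeLE_of_forall_eq (q : ℕ) {n : ℕ} {f : (Fin n → Bool) → Bool}
    (hf : ∀ x y, f x = f y) (D : ℕ) : HasRepDegreeLE q f D := by
  refine ⟨C (if f default then 1 else 0), fun d hd i => ?_,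
    fun x => by rw [eval_C, hf x default], ?_⟩
  · rw [support_C] at hd
    split_ifs at hd <;> simp_all
  · rw [totalDegree_C]
    exact D.zero_le

lemma MvPolynomial.card_support_le_totalDegree {σ R : Type*} [CommSemiring R]
    {P : MvPolynomial σ R} {d : σ →₀ ℕ} (hd : d ∈ P.support) :
    #d.support ≤ P.totalDegree :=
  calc #d.support = #d.support • 1 := (mul_one _).symm
    _ ≤ ∑ i ∈ d.support, d i :=
        card_nsmul_le_sum _ _ _ fun _ hi => Nat.one_le_iff_ne_zero.2 (Finsupp.mem_support_iff.1 hi)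
    _ ≤ P.totalDegree := le_totalDegree hd

def multilinearMonomials (σ : Type*) (D : ℕ) : Set (σ →₀ ℕ) :=
  {d | (∀ i, d i ≤ 1) ∧ #d.support ≤ D}

lemma Multilinear.support_subset {n q D : ℕ} {P : MvPolynomial (Fin n) (ZMod q)}
    (hP : Multilinear P) (hD : P.totalDegree ≤ D) :
    ↑P.support ⊆ multilinearMonomials (Fin n) D :=
  fun d hd => ⟨hP d hd, (card_support_le_totalDegree hd).trans hD⟩

lemma card_finset_of_card_le (α : Type*) [Fintype α] (D : ℕ) :
    Nat.card {S : Finset α // #S ≤ D} ≤ (D + 1) * (Fintype.card α + 1) ^ D := by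
  classical
  set n := Fintype.card α
  rw [Nat.card_eq_fintype_card, Fintype.card_subtype]
  calc #{S : Finset α | #S ≤ D}
      ≤ ∑ k ∈ range (D + 1), #(powersetCard k (univ : Finset α)) := by
        refine (card_le_card fun S hS =>
          mem_biUnion.2 ⟨#S, ?_, mem_powersetCard_univ.2 rfl⟩).trans card_biUnion_le
        simpa [Nat.lt_succ_iff] using hS
    _ ≤ ∑ _k ∈ range (D + 1), (n + 1) ^ D := by
        refine sum_le_sum fun k hk => ?_
        rw [card_powersetCard, card_univ]
        calc n.choose k ≤ n ^ k := Nat.choose_le_pow n k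
          _ ≤ (n + 1) ^ k := Nat.pow_le_pow_left n.le_succ k
          _ ≤ (n + 1) ^ D := Nat.pow_le_pow_right n.succ_pos (Nat.lt_succ_iff.1 (mem_range.1 hk))
    _ = (D + 1) * (n + 1) ^ D := by simp

lemma support_injOn_multilinearMonomials (σ : Type*) (D : ℕ) :
    Set.InjOn Finsupp.support (multilinearMonomials σ D) := by
  intro d hd e he hde
  ext i
  have hi : d i = 0 ↔ e i = 0 := by
    simpa only [Finsupp.notMem_support_iff] using not_congr (Finset.ext_iff.1 hde i)
  have := hd.1 i
  have := he.1 i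
  omega

lemma card_multilinearMonomials_le (σ : Type*) [Fintype σ] (D : ℕ) :
    Nat.card (multilinearMonomials σ D) ≤ (D + 1) * (Fintype.card σ + 1) ^ D :=
  (Nat.card_le_card_of_injective (fun d => (⟨d.1.support, d.2.2⟩ : {S : Finset σ // #S ≤ D}))
    fun d e hde => Subtype.ext (support_injOn_multilinearMonomials σ D d.2 e.2
      (congrArg Subtype.val hde))).trans (card_finset_of_card_le σ D)

instance (σ : Type*) [Finite σ] (D : ℕ) : Finite (multilinearMonomials σ D) :=
  (Set.Finite.of_finite_image (Set.toFinite _) (support_injOn_multilinearMonomials σ D)).to_subtype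

lemma card_hasRepDegreeLE_le {p : ℕ} (hp : 1 < p) (n D : ℕ) :
    Nat.card {f : (Fin n → Bool) → Bool // HasRepDegreeLE p f D} ≤
      p ^ ((D + 1) * (n + 1) ^ D) := by
  have : Fact (1 < p) := ⟨hp⟩
  choose P hPm hPf hPD using fun f : {f : (Fin n → Bool) → Bool // HasRepDegreeLE p f D} => f.2
  have hcoeff :
      Function.Injective fun f (d : multilinearMonomials (Fin n) D) => coeff d.1 (P f) := by
    intro f g hfg
    have hPQ : P f = P g := by
      ext d
      by_cases hd : d ∈ multilinearMonomials (Fin n) D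
      · exact congrFun hfg ⟨d, hd⟩
      · rw [notMem_support_iff.1 fun h => hd ((hPm f).support_subset (hPD f) h),
          notMem_support_iff.1 fun h => hd ((hPm g).support_subset (hPD g) h)]
    exact Subtype.ext ((hPf f).unique (hPQ ▸ hPf g))
  calc Nat.card {f : (Fin n → Bool) → Bool // HasRepDegreeLE p f D}
      ≤ Nat.card (multilinearMonomials (Fin n) D → ZMod p) :=
        Nat.card_le_card_of_injective _ hcoeff
    _ = p ^ Nat.card (multilinearMonomials (Fin n) D) := by rw [Nat.card_fun, Nat.card_zmod]
    _ ≤ p ^ ((D + 1) * (n + 1) ^ D) := by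
        simpa using Nat.pow_le_pow_right (by omega) (card_multilinearMonomials_le (Fin n) D)

lemma Nat.le_log_two_of_cast_le_logb {d n : ℕ} (h : (d : ℝ) ≤ Real.logb 2 n) :
    d ≤ Nat.log 2 n := by
  have hfloor : (d : ℤ) ≤ ⌊Real.logb 2 n⌋ := Int.le_floor.2 (by exact_mod_cast h)
  rw [show (2 : ℝ) = ((2 : ℕ) : ℝ) by norm_num, Real.floor_logb_natCast n.cast_nonneg,
    Int.log_natCast] at hfloor
  exact_mod_cast hfloor

lemma hasRepDegreeLE_log_of_mul_le_logb {p q n : ℕ} (hp : 0 < p) (hq : 1 < q)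
    {f : (Fin n → Bool) → Bool} {dp dq : ℕ} (hdp : RepDegree p f dp) (hdq : RepDegree q f dq)
    (hle : ((p * q * dp * dq : ℕ) : ℝ) ≤ Real.logb 2 n - 1) :
    HasRepDegreeLE p f (Nat.log 2 n) := by
  have : Fact (1 < q) := ⟨hq⟩
  obtain ⟨P, hPm, hPf, rfl⟩ := hdp
  obtain ⟨Q, -, hQf, rfl⟩ := hdq
  rcases Nat.eq_zero_or_pos Q.totalDegree with h0 | hpos
  · exact hasRepDegreeLE_of_forall_eq p (hQf.apply_eq_of_totalDegree_eq_zero h0) _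
  · refine ⟨P, hPm, hPf, Nat.le_log_two_of_cast_le_logb ?_⟩
    have hdp : P.totalDegree ≤ p * q * P.totalDegree * Q.totalDegree := by
      have : 0 < p * q * Q.totalDegree := by positivity
      nlinarith
    calc (P.totalDegree : ℝ) ≤ ((p * q * P.totalDegree * Q.totalDegree : ℕ) : ℝ) := by
          exact_mod_cast hdp
      _ ≤ Real.logb 2 n := by linarith

lemma sq_add_lt_two_pow {L : ℕ} (hL : 7 ≤ L) : (L + 1) ^ 2 + L < 2 ^ L := by
  induction L, hL using Nat.le_induction with
  | base => norm_num
  | succ L hL ih => rw [pow_succ 2 L]; nlinarith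

lemma two_pow_add_le_two_pow {k n : ℕ} (h : k < n) : 2 ^ k + n ≤ 2 ^ n := by
  obtain ⟨m, rfl⟩ := Nat.exists_eq_add_of_lt h
  have h1 : 2 ^ k ≤ 2 ^ (k + m) := Nat.pow_le_pow_right two_pos (by omega)
  have h2 : k + m + 1 ≤ 2 ^ (k + m) := Nat.lt_two_pow_self
  rw [pow_succ]
  omega

lemma pow_mul_two_pow_le_two_pow_two_pow {p n : ℕ} (hn : 2 ^ (p + 7) ≤ n) :
    p ^ ((Nat.log 2 n + 1) * (n + 1) ^ Nat.log 2 n) * 2 ^ n ≤ 2 ^ 2 ^ n := by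
  set L := Nat.log 2 n
  have hL : p + 7 ≤ L := Nat.le_log_of_pow_le one_lt_two hn
  have h2L : 2 ^ L ≤ n := Nat.pow_log_le_self 2 ((Nat.two_pow_pos _).trans_le hn).ne'
  have hn1 : n + 1 ≤ 2 ^ (L + 1) := Nat.lt_pow_succ_log_self one_lt_two n
  have hexp : p * ((L + 1) * (n + 1) ^ L) ≤ 2 ^ (p + (L + 1) ^ 2) :=
    calc p * ((L + 1) * (n + 1) ^ L) ≤ 2 ^ p * (2 ^ (L + 1) * (2 ^ (L + 1)) ^ L) := by
          gcongr
          exacts [Nat.lt_two_pow_self.le, Nat.lt_two_pow_self.le]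
      _ = 2 ^ (p + (L + 1) ^ 2) := by ring
  have hlt : p + (L + 1) ^ 2 < n := by
    have := sq_add_lt_two_pow (L := L) (by omega)
    omega
  calc p ^ ((L + 1) * (n + 1) ^ L) * 2 ^ n ≤ (2 ^ p) ^ ((L + 1) * (n + 1) ^ L) * 2 ^ n := by
        gcongr
        exact Nat.lt_two_pow_self.le
    _ = 2 ^ (p * ((L + 1) * (n + 1) ^ L) + n) := by rw [← pow_mul, ← pow_add]
    _ ≤ 2 ^ 2 ^ n := Nat.pow_le_pow_right two_pos
        ((Nat.add_le_add_right hexp n).trans (two_pow_add_le_two_pow hlt))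

lemma tendsto_card_subtype_div_of_compl {ι : Type*} {l : Filter ι} {α : ι → Type*}
    [∀ i, Finite (α i)] [∀ i, Nonempty (α i)] (P : ∀ i, α i → Prop)
    (h : Tendsto (fun i => (Nat.card {x // ¬ P i x} : ℝ) / Nat.card (α i)) l (𝓝 0)) :
    Tendsto (fun i => (Nat.card {x // P i x} : ℝ) / Nat.card (α i)) l (𝓝 1) := by
  have hsplit : ∀ i, (Nat.card {x // P i x} : ℝ) / Nat.card (α i)
      = 1 - (Nat.card {x // ¬ P i x} : ℝ) / Nat.card (α i) := by
    intro i
    classical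
    have hcard : Nat.card {x // P i x} + Nat.card {x // ¬ P i x} = Nat.card (α i) := by
      rw [← Nat.card_sum, Nat.card_congr (Equiv.sumCompl _)]
    have hpos : (Nat.card (α i) : ℝ) ≠ 0 := by exact_mod_cast Nat.card_pos.ne'
    rw [eq_sub_iff_add_eq, ← add_div, div_eq_one_iff_eq hpos]
    exact_mod_cast hcard
  simpa only [hsplit, sub_zero] using tendsto_const_nhds.sub h

theorem almost_all_two_prime_degree_lower_bound_general (p q : ℕ)
    (hp : p.Prime) (hq : q.Prime) :
    Filter.Tendsto (fun n : ℕ =>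
      (Nat.card {f : (Fin n → Bool) → Bool //
          ∀ dp dq : ℕ, RepDegree p f dp → RepDegree q f dq →
            Real.logb 2 n - 1 < ((p * q * dp * dq : ℕ) : ℝ)} : ℝ) / 2 ^ (2 ^ n))
      Filter.atTop (nhds 1) := by
  have hcard (n : ℕ) : (2 : ℝ) ^ 2 ^ n = Nat.card ((Fin n → Bool) → Bool) := by simp
  simp only [hcard]
  refine tendsto_card_subtype_div_of_compl _ (squeeze_zero' (.of_forall fun n => by positivity) ?_
    (tendsto_pow_atTop_nhds_zero_of_lt_one (r := 1 / 2) (by norm_num) (by norm_num)))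
  filter_upwards [eventually_ge_atTop (2 ^ (p + 7))] with n hn
  have hbad : Nat.card {f : (Fin n → Bool) → Bool // ¬ ∀ dp dq : ℕ, RepDegree p f dp →
      RepDegree q f dq → Real.logb 2 n - 1 < ((p * q * dp * dq : ℕ) : ℝ)}
        ≤ Nat.card {f : (Fin n → Bool) → Bool // HasRepDegreeLE p f (Nat.log 2 n)} := by
    refine Nat.card_le_card_of_injective (Subtype.map id fun f hf => ?_)
      (Subtype.map_injective _ Function.injective_id)
    push Not at hf
    obtain ⟨dp, dq, hdp, hdq, hle⟩ := hf
    exact hasRepDegreeLE_log_of_mul_le_logb hp.pos hq.one_lt hdp hdq hle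
  have hnat := (Nat.mul_le_mul_right (2 ^ n)
      (hbad.trans (card_hasRepDegreeLE_le hp.one_lt n _))).trans
    (pow_mul_two_pow_le_two_pow_two_pow hn)
  rw [div_le_iff₀ (Nat.cast_pos.2 Nat.card_pos), ← hcard, one_div_pow, one_div_mul_eq_div,
    le_div_iff₀ (by positivity)]
  exact_mod_cast hnat

/-- For fixed distinct primes `p, q`, the fraction of Boolean functions
`f : {0,1}^n → {0,1}` satisfying `p · q · d_p(f) · d_q(f) > log₂ n - 1` tends to `1`
as `n → ∞`. -/
theorem almost_all_two_prime_degree_lower_bound (p q : ℕ)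
    (hp : p.Prime) (hq : q.Prime) (hpq : p ≠ q) :
    Filter.Tendsto (fun n : ℕ =>
      (Nat.card {f : (Fin n → Bool) → Bool //
          ∀ dp dq : ℕ, RepDegree p f dp → RepDegree q f dq →
            Real.logb 2 n - 1 < ((p * q * dp * dq : ℕ) : ℝ)} : ℝ) / 2 ^ (2 ^ n))
      Filter.atTop (nhds 1) :=
  almost_all_two_prime_degree_lower_bound_general p q hp hq
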